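/- Let M be a locally compact Hausdorff space with a continuous flow φ, and assume (A0) and (A1). Then for every open set V₀ ⊇ K there exists an open set V with K ⊆ V ⊆ V₀ such that V ∩ K₊ ⊆ K₊(V₀) and V ∩ K₋ ⊆ K₋(V₀). -/
import Mathlib


noncomputable section

variable {M : Type*} [TopologicalSpace M]

/-- The forward trapped set of a flow `φ` in a subset `S`:
`K₊(S) = {x ∈ S : φ_t(x) ∈ S for all t ≥ 0}`. -/
def Kp (φ : ℝ → M → M) (S : Set M) : Set M :=
  {x ∈ S | ∀ t : ℝ, 0 ≤ t → φ t x ∈ S}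

/-- The backward trapped set of a flow `φ` in a subset `S`:
`K₋(S) = {x ∈ S : φ_{-t}(x) ∈ S for all t ≥ 0}`. -/
def Km (φ : ℝ → M → M) (S : Set M) : Set M :=
  {x ∈ S | ∀ t : ℝ, 0 ≤ t → φ (-t) x ∈ S}

/-- The global forward trapped set `K₊ = ⋃ {K₊(C) : C compact}`. -/
def KpGlob (φ : ℝ → M → M) : Set M :=
  {x | ∃ C : Set M, IsCompact C ∧ x ∈ Kp φ C}

/-- The global backward trapped set `K₋ = ⋃ {K₋(C) : C compact}`. -/
def KmGlob (φ : ℝ → M → M) : Set M :=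
  {x | ∃ C : Set M, IsCompact C ∧ x ∈ Km φ C}

/-- The trapped set `K = K₊ ∩ K₋`. -/
def Ktrap (φ : ℝ → M → M) : Set M := KpGlob φ ∩ KmGlob φ

/-- Assumption (A1): whenever `C₁, C₂` are compact and the set of times `t ≥ 0` with
`φ_t(C₁) ∩ C₂ ≠ ∅` is unbounded, `C₁` meets `K₊` and `C₂` meets `K₋`. -/
def AssumptionA1 (φ : ℝ → M → M) : Prop :=
  ∀ C₁ C₂ : Set M, IsCompact C₁ → IsCompact C₂ →
    ¬ BddAbove {t : ℝ | 0 ≤ t ∧ ((φ t '' C₁) ∩ C₂).Nonempty} →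
    (C₁ ∩ KpGlob φ).Nonempty ∧ (C₂ ∩ KmGlob φ).Nonempty

/-- The non-wandering set of the flow `φ`. -/
def NW (φ : ℝ → M → M) : Set M :=
  {x | ∀ V : Set M, IsOpen V → x ∈ V → ∀ T : ℝ, 0 < T →
    ∃ t : ℝ, T ≤ t ∧ ((φ t '' V) ∩ V).Nonempty}

/-! ### Auxiliary material for the proof of `stmt13` -/

/-- The time-reversed flow. -/
def RevFlow (φ : ℝ → M → M) : ℝ → M → M := fun t x => φ (-t) x

namespace Stmt13Aux

variable {φ : ℝ → M → M}

lemma cont_t (hφcont : Continuous fun p : ℝ × M => φ p.1 p.2) (x : M) :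
    Continuous fun t : ℝ => φ t x :=
  hφcont.comp (continuous_id.prodMk continuous_const)

lemma cont_x (hφcont : Continuous fun p : ℝ × M => φ p.1 p.2) (t : ℝ) :
    Continuous fun x : M => φ t x :=
  hφcont.comp (continuous_const.prodMk continuous_id)

lemma rev_cont (hφcont : Continuous fun p : ℝ × M => φ p.1 p.2) :
    Continuous fun p : ℝ × M => RevFlow φ p.1 p.2 :=
  hφcont.comp ((continuous_fst.neg).prodMk continuous_snd)

lemma rev_zero (hφ0 : ∀ x : M, φ 0 x = x) : ∀ x : M, RevFlow φ 0 x = x := by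
  intro x; simp only [RevFlow, neg_zero]; exact hφ0 x

lemma rev_add (hφadd : ∀ s t : ℝ, ∀ x : M, φ (s + t) x = φ s (φ t x)) :
    ∀ s t : ℝ, ∀ x : M, RevFlow φ (s + t) x = RevFlow φ s (RevFlow φ t x) := by
  intro s t x; simp only [RevFlow, neg_add]; exact hφadd (-s) (-t) x

lemma kpGlob_rev : KpGlob (RevFlow φ) = KmGlob φ := rfl

lemma kmGlob_rev : KmGlob (RevFlow φ) = KpGlob φ := by
  ext x
  constructor
  · rintro ⟨C, hC, hxC, h⟩
    exact ⟨C, hC, hxC, fun t ht => by simpa [RevFlow, neg_neg] using h t ht⟩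
  · rintro ⟨C, hC, hxC, h⟩
    exact ⟨C, hC, hxC, fun t ht => by simpa [RevFlow, neg_neg] using h t ht⟩

lemma ktrap_rev : Ktrap (RevFlow φ) = Ktrap φ := by
  unfold Ktrap
  rw [kpGlob_rev, kmGlob_rev, Set.inter_comm]

lemma rev_a1 (hφ0 : ∀ x : M, φ 0 x = x)
    (hφadd : ∀ s t : ℝ, ∀ x : M, φ (s + t) x = φ s (φ t x))
    (hA1 : AssumptionA1 φ) : AssumptionA1 (RevFlow φ) := by
  intro C₁ C₂ h₁ h₂ hb
  have hset : {t : ℝ | 0 ≤ t ∧ ((RevFlow φ t '' C₁) ∩ C₂).Nonempty}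
      = {t : ℝ | 0 ≤ t ∧ ((φ t '' C₂) ∩ C₁).Nonempty} := by
    ext t
    simp only [Set.mem_setOf_eq, and_congr_right_iff]
    intro _
    constructor
    · rintro ⟨y, ⟨x, hxC₁, rfl⟩, hyC₂⟩
      refine ⟨x, ⟨RevFlow φ t x, hyC₂, ?_⟩, hxC₁⟩
      show φ t (φ (-t) x) = x
      rw [← hφadd, add_neg_cancel, hφ0]
    · rintro ⟨x, ⟨y, hyC₂, rfl⟩, hxC₁⟩
      refine ⟨y, ⟨φ t y, hxC₁, ?_⟩, hyC₂⟩
      show φ (-t) (φ t y) = y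
      rw [← hφadd, neg_add_cancel, hφ0]
  rw [hset] at hb
  obtain ⟨h2, h1⟩ := hA1 C₂ C₁ h₂ h₁ hb
  refine ⟨?_, ?_⟩
  · rw [kpGlob_rev]; exact h1
  · rw [kmGlob_rev]; exact h2

lemma kpGlob_invariant (hφcont : Continuous fun p : ℝ × M => φ p.1 p.2)
    (hφadd : ∀ s t : ℝ, ∀ x : M, φ (s + t) x = φ s (φ t x))
    {x : M} (hx : x ∈ KpGlob φ) (s : ℝ) : φ s x ∈ KpGlob φ := by
  obtain ⟨C, hC, hxC, hfor⟩ := hx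
  refine ⟨C ∪ (fun t => φ t x) '' Set.Icc (min s 0) (max s 0),
    hC.union (isCompact_Icc.image (cont_t hφcont x)), ?_, ?_⟩
  · exact Or.inr ⟨s, ⟨min_le_left _ _, le_max_left _ _⟩, rfl⟩
  · intro u hu
    rw [show φ u (φ s x) = φ (u + s) x from (hφadd u s x).symm]
    by_cases h : 0 ≤ u + s
    · exact Or.inl (hfor _ h)
    · push_neg at h
      exact Or.inr ⟨u + s, ⟨le_trans (min_le_left _ _) (by linarith),
        le_trans h.le (le_max_right _ _)⟩, rfl⟩

/-- If `x ∈ K₊` then the forward orbit of `x` is eventually in any open set `W ⊇ K`. -/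
lemma eventually_forward_mem [T2Space M]
    (hφcont : Continuous fun p : ℝ × M => φ p.1 p.2)
    (hφadd : ∀ s t : ℝ, ∀ x : M, φ (s + t) x = φ s (φ t x))
    {W : Set M} (hWo : IsOpen W) (hKW : Ktrap φ ⊆ W)
    {x : M} (hx : x ∈ KpGlob φ) :
    ∃ T : ℝ, ∀ t, T ≤ t → φ t x ∈ W := by
  obtain ⟨C, hC, hxC, hfor⟩ := hx
  by_cases hbdd : BddAbove {t : ℝ | 0 ≤ t ∧ φ t x ∉ W}
  · obtain ⟨b, hb⟩ := hbdd
    refine ⟨max b 0 + 1, fun t ht => ?_⟩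
    by_contra hmem
    have h0t : 0 ≤ t := le_trans (by positivity) ht
    have := hb ⟨h0t, hmem⟩
    have := le_max_left b 0
    simp only [upperBounds, Set.mem_setOf_eq] at *
    linarith
  · exfalso
    set E := {t : ℝ | 0 ≤ t ∧ φ t x ∉ W} with hE
    set L := Filter.atTop ⊓ Filter.principal E with hL
    have hNB : L.NeBot := by
      rw [hL, Filter.inf_principal_neBot_iff]
      intro U hU
      obtain ⟨a, ha⟩ := Filter.mem_atTop_sets.mp hU
      obtain ⟨b, hbE, hab⟩ := not_bddAbove_iff.mp hbdd a
      exact ⟨b, ha b hab.le, hbE⟩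
    have hmapC : Filter.map (fun t => φ t x) L ≤ Filter.principal (C \ W) := by
      rw [Filter.le_principal_iff, Filter.mem_map]
      have hsub : E ⊆ {t | φ t x ∈ C \ W} := fun t ht => ⟨hfor t ht.1, ht.2⟩
      exact Filter.mem_of_superset (Filter.mem_inf_of_right (Filter.mem_principal_self E)) hsub
    haveI : (Filter.map (fun t => φ t x) L).NeBot := Filter.map_neBot
    obtain ⟨y, hyCW, hy⟩ := (hC.diff hWo).exists_clusterPt hmapC
    have hyall : ∀ s : ℝ, φ s y ∈ C := by
      intro s
      have hcl : ClusterPt (φ s y)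
          (Filter.map (fun z => φ s z) (Filter.map (fun t => φ t x) L)) :=
        hy.map (cont_x hφcont s).continuousAt Filter.tendsto_map
      have hle : Filter.map (fun z => φ s z) (Filter.map (fun t => φ t x) L)
          ≤ Filter.principal C := by
        rw [Filter.map_map, Filter.le_principal_iff, Filter.mem_map]
        have h1 : {t : ℝ | -s ≤ t} ∈ L := Filter.mem_inf_of_left (Filter.mem_atTop _)
        have h2 : E ∈ L := Filter.mem_inf_of_right (Filter.mem_principal_self E)
        filter_upwards [h1, h2] with t h1t h2t
        show φ s (φ t x) ∈ C
        rw [← hφadd s t x]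
        exact hfor _ (by linarith [h2t.1])
      have : ClusterPt (φ s y) (Filter.principal C) := hcl.mono hle
      have := mem_closure_iff_clusterPt.mpr this
      rwa [hC.isClosed.closure_eq] at this
    have hyK : y ∈ Ktrap φ :=
      ⟨⟨C, hC, hyCW.1, fun t _ => hyall t⟩, ⟨C, hC, hyCW.1, fun t _ => hyall (-t)⟩⟩
    exact hyCW.2 (hKW hyK)

/-- Key consequence of (A1): a uniform bound on the time at which a point of
`closure W` can be mapped to a point of `closure W \ W` whose whole forward orbit
stays in `closure W`. -/
lemma exists_escape_bound [T2Space M]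
    (hφcont : Continuous fun p : ℝ × M => φ p.1 p.2)
    (hA1 : AssumptionA1 φ)
    {W : Set M} (hWo : IsOpen W) (hKW : Ktrap φ ⊆ W) (hU : IsCompact (closure W)) :
    ∃ T : ℝ, 0 ≤ T ∧ ∀ s, T ≤ s → ∀ x ∈ closure W,
      ¬(φ s x ∈ closure W ∧ φ s x ∉ W ∧ ∀ u, 0 ≤ u → φ u (φ s x) ∈ closure W) := by
  set U := closure W with hUdef
  set Q := {y | y ∈ U ∧ y ∉ W ∧ ∀ u, 0 ≤ u → φ u y ∈ U} with hQdef
  by_cases hbdd : BddAbove {t : ℝ | 0 ≤ t ∧ ((φ t '' U) ∩ Q).Nonempty}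
  · obtain ⟨b, hb⟩ := hbdd
    refine ⟨max b 0 + 1, by positivity, fun s hs x hxU hQmem => ?_⟩
    have h0s : 0 ≤ s := le_trans (by positivity) hs
    have hsmem : s ∈ {t : ℝ | 0 ≤ t ∧ ((φ t '' U) ∩ Q).Nonempty} :=
      ⟨h0s, ⟨φ s x, ⟨x, hxU, rfl⟩, hQmem⟩⟩
    have := hb hsmem
    have := le_max_left b 0
    linarith
  · exfalso
    have hQclosed : IsClosed Q := by
      have h1 : IsClosed U := isClosed_closure
      have h2 : IsClosed {y : M | ∀ u, 0 ≤ u → φ u y ∈ U} := by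
        have heq : {y : M | ∀ u, 0 ≤ u → φ u y ∈ U}
            = ⋂ u ∈ Set.Ici (0:ℝ), (fun y => φ u y) ⁻¹' U := by
          ext y; simp [Set.mem_iInter, Set.mem_Ici]
        rw [heq]
        exact isClosed_biInter fun u _ => h1.preimage (cont_x hφcont u)
      have heq : Q = (U ∩ Wᶜ) ∩ {y : M | ∀ u, 0 ≤ u → φ u y ∈ U} := by
        ext y; simp only [hQdef, Set.mem_setOf_eq, Set.mem_inter_iff, Set.mem_compl_iff]; tauto
      rw [heq]
      exact (h1.inter hWo.isClosed_compl).inter h2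
    have hQc : IsCompact Q := IsCompact.of_isClosed_subset hU hQclosed fun y hy => hy.1
    obtain ⟨-, q, hqQ, hqKm⟩ := hA1 U Q hU hQc hbdd
    have hqKp : q ∈ KpGlob φ := ⟨U, hU, hqQ.1, hqQ.2.2⟩
    exact hqQ.2.1 (hKW ⟨hqKp, hqKm⟩)

/-- The main forward half: there is `T ≥ 0` such that any point of `K₊` whose orbit
stays in `W` on `[0, T]` has its whole forward orbit in `W`. -/
lemma forward_half [T2Space M]
    (hφcont : Continuous fun p : ℝ × M => φ p.1 p.2)
    (hφ0 : ∀ x : M, φ 0 x = x)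
    (hφadd : ∀ s t : ℝ, ∀ x : M, φ (s + t) x = φ s (φ t x))
    (hA1 : AssumptionA1 φ)
    {W : Set M} (hWo : IsOpen W) (hKW : Ktrap φ ⊆ W) (hUc : IsCompact (closure W)) :
    ∃ T : ℝ, 0 ≤ T ∧ ∀ x ∈ KpGlob φ,
      (∀ t ∈ Set.Icc (0:ℝ) T, φ t x ∈ W) → ∀ t, 0 ≤ t → φ t x ∈ W := by
  obtain ⟨T, hT0, hT⟩ := exists_escape_bound hφcont hA1 hWo hKW hUc
  refine ⟨T, hT0, fun x hx hxV t ht => ?_⟩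
  by_contra hesc
  obtain ⟨T', hT'⟩ := eventually_forward_mem hφcont hφadd hWo hKW hx
  set E := {u : ℝ | 0 ≤ u ∧ φ u x ∉ W} with hEdef
  have hEne : E.Nonempty := ⟨t, ht, hesc⟩
  have hEbdd : BddAbove E := by
    refine ⟨max T' 0, fun u hu => ?_⟩
    by_contra h
    push_neg at h
    exact hu.2 (hT' u (le_trans (le_max_left _ _) h.le))
  have hEclosed : IsClosed E := by
    have heq : E = Set.Ici (0:ℝ) ∩ (fun u => φ u x) ⁻¹' Wᶜ := by
      ext u; simp [hEdef, Set.mem_Ici]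
    rw [heq]
    exact isClosed_Ici.inter (hWo.isClosed_compl.preimage (cont_t hφcont x))
  have hsE : sSup E ∈ E := hEclosed.csSup_mem hEne hEbdd
  set s := sSup E with hsdef
  have hts : t ≤ s := le_csSup hEbdd ⟨ht, hesc⟩
  have hafter : ∀ u, 0 < u → φ (u + s) x ∈ W := by
    intro u hu
    by_contra h
    have hmem : u + s ∈ E := ⟨by linarith [hsE.1], h⟩
    have := le_csSup hEbdd hmem
    linarith
  have hclosW : φ s x ∈ closure W := by
    have hc : Continuous fun u : ℝ => φ (u + s) x :=
      (cont_t hφcont x).comp (continuous_id.add continuous_const)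
    have htd : Filter.Tendsto (fun u : ℝ => φ (u + s) x)
        (nhdsWithin 0 (Set.Ioi 0)) (nhds (φ s x)) := by
      have h1 := hc.continuousAt (x := (0:ℝ))
      rw [ContinuousAt, zero_add] at h1
      exact h1.mono_left nhdsWithin_le_nhds
    refine mem_closure_of_tendsto htd ?_
    filter_upwards [self_mem_nhdsWithin] with u hu
    exact hafter u hu
  have hQmem : φ s x ∈ closure W ∧ φ s x ∉ W ∧ ∀ u, 0 ≤ u → φ u (φ s x) ∈ closure W := by
    refine ⟨hclosW, hsE.2, fun u hu => ?_⟩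
    rcases eq_or_lt_of_le hu with h | h
    · rw [← h, hφ0]; exact hclosW
    · rw [← hφadd u s x]; exact subset_closure (hafter u h)
  have hxW : x ∈ W := by
    have := hxV 0 ⟨le_refl 0, hT0⟩
    rwa [hφ0] at this
  have hsT : ¬ T ≤ s := fun h => hT s h x (subset_closure hxW) hQmem
  push_neg at hsT
  exact hesc (hxV t ⟨ht, le_of_lt (lt_of_le_of_lt hts hsT)⟩)

lemma isOpen_segment_set (hφcont : Continuous fun p : ℝ × M => φ p.1 p.2)
    {W : Set M} (hWo : IsOpen W) (a b : ℝ) :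
    IsOpen {x : M | ∀ t ∈ Set.Icc a b, φ t x ∈ W} := by
  rw [isOpen_iff_mem_nhds]
  intro x hx
  have hsub : Set.Icc a b ×ˢ ({x} : Set M) ⊆ (fun p : ℝ × M => φ p.1 p.2) ⁻¹' W := by
    rintro ⟨t, y⟩ ⟨ht, hy⟩
    rcases hy with rfl
    exact hx t ht
  obtain ⟨u, v, _, hv, hIu, hxv, huv⟩ :=
    generalized_tube_lemma isCompact_Icc isCompact_singleton (hWo.preimage hφcont) hsub
  refine Filter.mem_of_superset (hv.mem_nhds (hxv rfl)) ?_
  intro y hy t ht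
  exact huv (Set.mk_mem_prod (hIu ht) hy)

end Stmt13Aux

open Stmt13Aux in
/-- Under (A0) and (A1), every open neighborhood `V₀` of `K` contains an open neighborhood
`V` of `K` such that `V ∩ K₊ ⊆ K₊(V₀)` and `V ∩ K₋ ⊆ K₋(V₀)`. -/
theorem stmt13 {M : Type*} [TopologicalSpace M] [T2Space M] [LocallyCompactSpace M]
    (φ : ℝ → M → M)
    (hφcont : Continuous fun p : ℝ × M => φ p.1 p.2)
    (hφ0 : ∀ x : M, φ 0 x = x)
    (hφadd : ∀ s t : ℝ, ∀ x : M, φ (s + t) x = φ s (φ t x))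
    (hA0 : IsCompact (Ktrap φ))
    (hA1 : AssumptionA1 φ)
    (V₀ : Set M) (hV₀ : IsOpen V₀) (hKV₀ : Ktrap φ ⊆ V₀) :
    ∃ V : Set M, IsOpen V ∧ Ktrap φ ⊆ V ∧ V ⊆ V₀ ∧
      V ∩ KpGlob φ ⊆ Kp φ V₀ ∧ V ∩ KmGlob φ ⊆ Km φ V₀ := by
  obtain ⟨L, hLc, hKL, hLV₀⟩ := exists_compact_between hA0 hV₀ hKV₀
  set W := interior L with hWdef
  have hWo : IsOpen W := isOpen_interior
  have hKW : Ktrap φ ⊆ W := hKL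
  have hclW : closure W ⊆ L := closure_minimal interior_subset hLc.isClosed
  have hUc : IsCompact (closure W) := IsCompact.of_isClosed_subset hLc isClosed_closure hclW
  have hWV₀ : W ⊆ V₀ := fun x hx => hLV₀ (interior_subset hx)
  -- reversed flow
  have hψcont := rev_cont (φ := φ) hφcont
  have hψ0 := rev_zero (φ := φ) hφ0
  have hψadd := rev_add (φ := φ) hφadd
  have hψA1 : AssumptionA1 (RevFlow φ) := rev_a1 hφ0 hφadd hA1
  have hψKW : Ktrap (RevFlow φ) ⊆ W := by rw [ktrap_rev]; exact hKW
  obtain ⟨Tp, hTp0, hTp⟩ := forward_half hφcont hφ0 hφadd hA1 hWo hKW hUc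
  obtain ⟨Tm, hTm0, hTm⟩ := forward_half hψcont hψ0 hψadd hψA1 hWo hψKW hUc
  set V := {x : M | ∀ t ∈ Set.Icc (-Tm) Tp, φ t x ∈ W} with hVdef
  have h0mem : (0:ℝ) ∈ Set.Icc (-Tm) Tp := ⟨neg_nonpos.mpr hTm0, hTp0⟩
  have hVW : V ⊆ W := by
    intro x hx
    have := hx 0 h0mem
    rwa [hφ0] at this
  refine ⟨V, isOpen_segment_set hφcont hWo _ _, ?_, fun x hx => hWV₀ (hVW hx), ?_, ?_⟩
  · -- Ktrap ⊆ V
    intro x hx t _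
    have h1 : φ t x ∈ KpGlob φ := kpGlob_invariant hφcont hφadd hx.1 t
    have h2 : φ t x ∈ KmGlob φ := by
      have hx2 : x ∈ KpGlob (RevFlow φ) := by rw [kpGlob_rev]; exact hx.2
      have := kpGlob_invariant hψcont hψadd hx2 (-t)
      rw [kpGlob_rev] at this
      simpa [RevFlow, neg_neg] using this
    exact hKW ⟨h1, h2⟩
  · -- V ∩ K₊ ⊆ Kp φ V₀
    rintro x ⟨hxV, hxK⟩
    refine ⟨hWV₀ (hVW hxV), fun t ht => ?_⟩
    have hseg : ∀ u ∈ Set.Icc (0:ℝ) Tp, φ u x ∈ W := fun u hu =>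
      hxV u ⟨le_trans (neg_nonpos.mpr hTm0) hu.1, hu.2⟩
    exact hWV₀ (hTp x hxK hseg t ht)
  · -- V ∩ K₋ ⊆ Km φ V₀
    rintro x ⟨hxV, hxK⟩
    refine ⟨hWV₀ (hVW hxV), fun t ht => ?_⟩
    have hxK' : x ∈ KpGlob (RevFlow φ) := by rw [kpGlob_rev]; exact hxK
    have hseg : ∀ u ∈ Set.Icc (0:ℝ) Tm, RevFlow φ u x ∈ W := by
      intro u hu
      show φ (-u) x ∈ W
      exact hxV (-u) ⟨neg_le_neg hu.2, le_trans (neg_nonpos.mpr hu.1) hTp0⟩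
    have := hTm x hxK' hseg t ht
    exact hWV₀ this
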